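/- X* = 0 is the unique solution of the Mixed LASSO problem min_X (1/2)‖Y − D X Bᵀ‖_F² + λ max_i ‖X_i‖₁ if and only if λ ≥ Σ_{i=1}^r ‖Dᵀ Y B_i‖_∞. -/

import Mathlib

open Matrix Finset

noncomputable def frob2 {n m : ℕ} (M : Matrix (Fin n) (Fin m) ℝ) : ℝ := ∑ i, ∑ j, (M i j)^2

def col {d r : ℕ} (X : Matrix (Fin d) (Fin r) ℝ) (i : Fin r) : Fin d → ℝ := fun j => X j i

noncomputable def l1 {d : ℕ} (x : Fin d → ℝ) : ℝ := ∑ j, |x j|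

/-! ### Auxiliary definitions and lemmas -/

noncomputable def ip {n m : ℕ} (A B : Matrix (Fin n) (Fin m) ℝ) : ℝ :=
  ∑ i, ∑ j, A i j * B i j

lemma sign_mul_self' (x : ℝ) : x * Real.sign x = |x| := by
  rcases lt_trichotomy x 0 with h | h | h
  · rw [Real.sign_of_neg h, abs_of_neg h]; ring
  · simp [h]
  · rw [Real.sign_of_pos h, abs_of_pos h]; ring

lemma abs_sign_le (x : ℝ) : |Real.sign x| ≤ 1 := by
  rcases Real.sign_apply_eq x with h | h | h <;> simp [h]

lemma frob2_nonneg {n m : ℕ} (M : Matrix (Fin n) (Fin m) ℝ) : 0 ≤ frob2 M :=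
  Finset.sum_nonneg fun _ _ => Finset.sum_nonneg fun _ _ => sq_nonneg _

lemma frob2_pos {n m : ℕ} (M : Matrix (Fin n) (Fin m) ℝ) (h : M ≠ 0) : 0 < frob2 M := by
  have : ∃ i j, M i j ≠ 0 := by
    by_contra hc
    push_neg at hc
    exact h (by ext i j; simp [hc i j])
  obtain ⟨i, j, hij⟩ := this
  have h1 : (M i j)^2 ≤ ∑ j', (M i j')^2 :=
    Finset.single_le_sum (f := fun j' => (M i j')^2) (fun _ _ => sq_nonneg _) (Finset.mem_univ j)
  have h2 : ∑ j', (M i j')^2 ≤ frob2 M :=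
    Finset.single_le_sum (f := fun i' => ∑ j', (M i' j')^2)
      (fun _ _ => Finset.sum_nonneg fun _ _ => sq_nonneg _) (Finset.mem_univ i)
  have := pow_pos (abs_pos.mpr hij) 2
  rw [sq_abs] at this
  linarith

lemma frob2_sub {n m : ℕ} (Y M : Matrix (Fin n) (Fin m) ℝ) :
    frob2 (Y - M) = frob2 Y - 2 * ip Y M + frob2 M := by
  have h : ∀ i j, (Y i j - M i j)^2 = Y i j ^ 2 - 2 * (Y i j * M i j) + M i j ^ 2 := by
    intros; ring
  simp only [frob2, ip, Matrix.sub_apply, h, Finset.sum_add_distrib, Finset.sum_sub_distrib,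
    ← Finset.mul_sum]

lemma ip_eq_trace {n m : ℕ} (A B : Matrix (Fin n) (Fin m) ℝ) :
    ip A B = Matrix.trace (Aᵀ * B) := by
  simp only [ip, Matrix.trace, Matrix.diag, Matrix.mul_apply, Matrix.transpose_apply]
  exact Finset.sum_comm

lemma ip_adjoint {n m d r : ℕ} (Y : Matrix (Fin n) (Fin m) ℝ)
    (D : Matrix (Fin n) (Fin d) ℝ) (B : Matrix (Fin m) (Fin r) ℝ)
    (Z : Matrix (Fin d) (Fin r) ℝ) :
    ip Y (D * Z * Bᵀ) = ip (Dᵀ * Y * B) Z := by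
  rw [ip_eq_trace, ip_eq_trace]
  rw [Matrix.transpose_mul, Matrix.transpose_mul, Matrix.transpose_transpose]
  rw [show Yᵀ * (D * Z * Bᵀ) = (Yᵀ * D * Z) * Bᵀ by noncomm_ring [Matrix.mul_assoc]]
  rw [Matrix.trace_mul_comm]
  noncomm_ring [Matrix.mul_assoc]

lemma frob2_smul {n m : ℕ} (c : ℝ) (M : Matrix (Fin n) (Fin m) ℝ) :
    frob2 (c • M) = c^2 * frob2 M := by
  simp only [frob2, Matrix.smul_apply, smul_eq_mul, mul_pow, ← Finset.mul_sum]

lemma ip_smul {n m : ℕ} (c : ℝ) (A M : Matrix (Fin n) (Fin m) ℝ) :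
    ip A (c • M) = c * ip A M := by
  simp only [ip, Matrix.smul_apply, smul_eq_mul, Finset.mul_sum]
  exact Finset.sum_congr rfl fun i _ => Finset.sum_congr rfl fun j _ => by ring

lemma iSup_zero_real {ι : Sort*} : (⨆ _ : ι, (0:ℝ)) = 0 := by
  rcases isEmpty_or_nonempty ι with h | h
  · exact Real.iSup_of_isEmpty _
  · exact ciSup_const

/-- `X* = 0` is the unique solution of the Mixed LASSO
if and only if `λ ≥ Σ_i ‖Dᵀ Y B_i‖_∞`. -/
theorem stmt11 {n m d r : ℕ} (hd : 0 < d) (Y : Matrix (Fin n) (Fin m) ℝ)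
    (D : Matrix (Fin n) (Fin d) ℝ) (B : Matrix (Fin m) (Fin r) ℝ)
    (lam : ℝ) (hlam : 0 < lam) :
    (∀ Z : Matrix (Fin d) (Fin r) ℝ, Z ≠ 0 →
        (1/2) * frob2 (Y - D * (0 : Matrix (Fin d) (Fin r) ℝ) * Bᵀ) +
          lam * ⨆ i : Fin r, l1 (_root_.col (0 : Matrix (Fin d) (Fin r) ℝ) i) <
        (1/2) * frob2 (Y - D * Z * Bᵀ) + lam * ⨆ i : Fin r, l1 (_root_.col Z i)) ↔
      (∑ i : Fin r, ⨆ j : Fin d, |(Dᵀ * Y * B) j i|) ≤ lam := by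
  haveI hne : Nonempty (Fin d) := Fin.pos_iff_nonempty.mp hd
  set G : Matrix (Fin d) (Fin r) ℝ := Dᵀ * Y * B with hG
  set S : ℝ := ∑ i : Fin r, ⨆ j : Fin d, |G j i| with hSdef
  have hbdd : ∀ i : Fin r, BddAbove (Set.range fun j : Fin d => |G j i|) :=
    fun i => Set.Finite.bddAbove (Set.finite_range _)
  have hsup_nn : ∀ i : Fin r, 0 ≤ ⨆ j : Fin d, |G j i| := by
    intro i
    exact le_trans (abs_nonneg _) (le_ciSup (hbdd i) (Classical.arbitrary (Fin d)))
  have hzero : (1/2) * frob2 (Y - D * (0 : Matrix (Fin d) (Fin r) ℝ) * Bᵀ) +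
          lam * (⨆ i : Fin r, l1 (_root_.col (0 : Matrix (Fin d) (Fin r) ℝ) i)) =
        (1/2) * frob2 Y := by
    have h2 : ∀ i : Fin r, l1 (_root_.col (0 : Matrix (Fin d) (Fin r) ℝ) i) = 0 := by
      intro i; simp [l1, _root_.col]
    simp only [h2, iSup_zero_real, Matrix.mul_zero, Matrix.zero_mul, sub_zero, mul_zero, add_zero]
  constructor
  · -- forward: uniqueness → S ≤ lam
    intro H
    by_contra hlt
    push_neg at hlt  -- lam < S
    have hS0 : 0 < S := lt_trans hlam hlt
    choose j hj using fun i : Fin r =>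
      exists_eq_ciSup_of_finite (f := fun k : Fin d => |G k i|)
    -- exists a column with positive sup
    obtain ⟨i0, -, hi0⟩ := Finset.exists_lt_of_sum_lt (f := fun _ : Fin r => (0:ℝ))
      (g := fun i => ⨆ k : Fin d, |G k i|) (by simpa using hS0)
    haveI : Nonempty (Fin r) := ⟨i0⟩
    set Z₁ : Matrix (Fin d) (Fin r) ℝ :=
      Matrix.of fun k i => if k = j i then Real.sign (G (j i) i) else 0 with hZ₁
    have hipZ₁ : ip G Z₁ = S := by
      rw [ip, Finset.sum_comm, hSdef]
      refine Finset.sum_congr rfl fun i _ => ?_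
      have : ∀ k : Fin d, G k i * Z₁ k i =
          if k = j i then G (j i) i * Real.sign (G (j i) i) else 0 := by
        intro k
        by_cases h : k = j i <;> simp [hZ₁, h]
      simp only [this, Finset.sum_ite_eq' Finset.univ (j i), Finset.mem_univ, if_true]
      rw [sign_mul_self', hj i]
    have hl1Z₁ : ∀ i : Fin r, l1 (_root_.col Z₁ i) ≤ 1 := by
      intro i
      have : ∀ k : Fin d, |_root_.col Z₁ i k| =
          if k = j i then |Real.sign (G (j i) i)| else 0 := by
        intro k
        by_cases h : k = j i <;> simp [_root_.col, hZ₁, h]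
      rw [l1]
      simp only [this, Finset.sum_ite_eq' Finset.univ (j i), Finset.mem_univ, if_true]
      exact abs_sign_le _
    set C : ℝ := frob2 (D * Z₁ * Bᵀ) with hC
    have hCnn : 0 ≤ C := frob2_nonneg _
    set ε : ℝ := min 1 ((S - lam) / (C + 1)) with hε
    have hεpos : 0 < ε :=
      lt_min one_pos (div_pos (by linarith) (by linarith))
    set Z : Matrix (Fin d) (Fin r) ℝ := ε • Z₁ with hZdef
    have hZne : Z ≠ 0 := by
      have hGpos : G (j i0) i0 ≠ 0 := by
        intro h
        have h2 : (0:ℝ) < |G (j i0) i0| := by rw [hj i0]; exact hi0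
        rw [h, abs_zero] at h2
        exact lt_irrefl 0 h2
      intro h
      have := congrFun (congrFun h (j i0)) i0
      simp only [hZdef, Matrix.smul_apply, hZ₁, Matrix.of_apply, if_pos rfl,
        Matrix.zero_apply, smul_eq_mul] at this
      rcases mul_eq_zero.mp this with h' | h'
      · exact (ne_of_gt hεpos) h'
      · exact hGpos (Real.sign_eq_zero_iff.mp h')
    have key := H Z hZne
    rw [hzero] at key
    -- compute the objective at Z
    have hDZB : D * Z * Bᵀ = ε • (D * Z₁ * Bᵀ) := by
      rw [hZdef, Matrix.mul_smul, Matrix.smul_mul]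
    have hipYM : ip Y (D * Z₁ * Bᵀ) = S := by
      rw [ip_adjoint, ← hG, hipZ₁]
    have hfrob : frob2 (Y - D * Z * Bᵀ) = frob2 Y - 2 * ε * S + ε^2 * C := by
      rw [hDZB, frob2_sub, ip_smul, hipYM, frob2_smul, ← hC]; ring
    have hT : (⨆ i : Fin r, l1 (_root_.col Z i)) ≤ ε := by
      refine ciSup_le fun i => ?_
      have : l1 (_root_.col Z i) = ε * l1 (_root_.col Z₁ i) := by
        simp only [l1, _root_.col, hZdef, Matrix.smul_apply, smul_eq_mul, abs_mul,
          abs_of_pos hεpos, ← Finset.mul_sum]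
      rw [this]
      calc ε * l1 (_root_.col Z₁ i) ≤ ε * 1 := by
            exact mul_le_mul_of_nonneg_left (hl1Z₁ i) (le_of_lt hεpos)
        _ = ε := mul_one ε
    have hεC : ε * C ≤ S - lam := by
      have h1 : ε ≤ (S - lam) / (C + 1) := min_le_right _ _
      have h2 : ε * C ≤ (S - lam) / (C + 1) * C :=
        mul_le_mul_of_nonneg_right h1 hCnn
      have h3 : (S - lam) / (C + 1) * C ≤ S - lam := by
        rw [div_mul_eq_mul_div, div_le_iff₀ (by linarith)]
        nlinarith
      linarith
    have hlamT : lam * (⨆ i : Fin r, l1 (_root_.col Z i)) ≤ lam * ε :=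
      mul_le_mul_of_nonneg_left hT (le_of_lt hlam)
    -- key : (1/2) * frob2 Y < (1/2) * (frob2 Y - 2εS + ε²C) + lam * T
    rw [hfrob] at key
    nlinarith [sq_nonneg ε, hεpos, hεC, hlamT, mul_pos hεpos (show (0:ℝ) < S - lam by linarith)]
  · -- backward: S ≤ lam → uniqueness
    intro hS Z hZ
    rw [hzero]
    obtain ⟨k0, i0, hki⟩ : ∃ k i, Z k i ≠ 0 := by
      by_contra hc
      push_neg at hc
      exact hZ (by ext k i; simp [hc k i])
    haveI : Nonempty (Fin r) := ⟨i0⟩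
    set T : ℝ := ⨆ i : Fin r, l1 (_root_.col Z i) with hTdef
    have hTi : ∀ i : Fin r, l1 (_root_.col Z i) ≤ T := fun i =>
      le_ciSup (f := fun i' : Fin r => l1 (_root_.col Z i'))
        (Set.Finite.bddAbove (Set.finite_range _)) i
    have hl1nn : ∀ i : Fin r, 0 ≤ l1 (_root_.col Z i) :=
      fun i => Finset.sum_nonneg fun _ _ => abs_nonneg _
    have hTpos : 0 < T := by
      have h1 : |Z k0 i0| ≤ l1 (_root_.col Z i0) :=
        Finset.single_le_sum (f := fun k => |_root_.col Z i0 k|)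
          (fun _ _ => abs_nonneg _) (Finset.mem_univ k0)
      have := abs_pos.mpr hki
      linarith [hTi i0]
    have hip : ip G Z ≤ S * T := by
      rw [ip, Finset.sum_comm, hSdef]
      calc ∑ i : Fin r, ∑ k : Fin d, G k i * Z k i
          ≤ ∑ i : Fin r, (⨆ k : Fin d, |G k i|) * l1 (_root_.col Z i) := by
            refine Finset.sum_le_sum fun i _ => ?_
            calc ∑ k : Fin d, G k i * Z k i
                ≤ ∑ k : Fin d, |G k i| * |Z k i| := by
                  refine Finset.sum_le_sum fun k _ => ?_
                  calc G k i * Z k i ≤ |G k i * Z k i| := le_abs_self _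
                    _ = |G k i| * |Z k i| := abs_mul _ _
              _ ≤ ∑ k : Fin d, (⨆ k' : Fin d, |G k' i|) * |Z k i| := by
                  refine Finset.sum_le_sum fun k _ => ?_
                  exact mul_le_mul_of_nonneg_right (le_ciSup (hbdd i) k) (abs_nonneg _)
              _ = (⨆ k' : Fin d, |G k' i|) * l1 (_root_.col Z i) := by
                  rw [l1, ← Finset.mul_sum]; rfl
        _ ≤ ∑ i : Fin r, (⨆ k : Fin d, |G k i|) * T := by
            refine Finset.sum_le_sum fun i _ => ?_
            exact mul_le_mul_of_nonneg_left (hTi i) (hsup_nn i)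
        _ = (∑ i : Fin r, ⨆ k : Fin d, |G k i|) * T := by rw [Finset.sum_mul]
    have hipYZ : ip Y (D * Z * Bᵀ) = ip G Z := ip_adjoint Y D B Z
    rw [frob2_sub]
    by_cases hM : D * Z * Bᵀ = 0
    · have : ip Y (D * Z * Bᵀ) = 0 := by rw [hM]; simp [ip]
      rw [this, hM]
      have : frob2 (0 : Matrix (Fin n) (Fin m) ℝ) = 0 := by simp [frob2]
      rw [this]
      linarith [mul_pos hlam hTpos]
    · have h1 : 0 < frob2 (D * Z * Bᵀ) := frob2_pos _ hM
      have h2 : ip G Z ≤ lam * T :=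
        le_trans hip (mul_le_mul_of_nonneg_right hS (le_of_lt hTpos))
      rw [hipYZ]
      linarith
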